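/- Suppose ρ₀ is a Γ-admissible metric in a domain D and there is a subfamily Γ₀ ⊆ Γ such that (i) ∫_γ ρ₀ ds = 1 for all γ ∈ Γ₀, and (ii) for every real-valued measurable h on D with ∫_γ h ds ≥ 0 for all γ ∈ Γ₀, one has ∬_D h ρ₀ dx dy ≥ 0. Then ρ₀ is extremal for Γ, i.e., mod(Γ) = ∬_D ρ₀² dx dy. -/

import Mathlib

open MeasureTheory Set Filter Topology
open scoped ENNReal NNReal

/-- The line integral of a density `ρ` along a curve `γ` parametrized on `[0,1]`. -/
noncomputable def curveIntegralρ (ρ : ℂ → ℝ) (γ : ℝ → ℂ) : ℝ :=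
  ∫ t in (0:ℝ)..1, ρ (γ t) * ‖deriv γ t‖

/-- `ρ` is an admissible metric for the curve family `Γ`. -/
def IsAdmissible (Γ : Set (ℝ → ℂ)) (ρ : ℂ → ℝ) : Prop :=
  Measurable ρ ∧ (∀ z, 0 ≤ ρ z) ∧ ∀ γ ∈ Γ, 1 ≤ curveIntegralρ ρ γ

/-- The conformal modulus of a family of curves in `ℂ`. -/
noncomputable def modulus (Γ : Set (ℝ → ℂ)) : ℝ≥0∞ :=
  ⨅ (ρ : ℂ → ℝ) (_ : IsAdmissible Γ ρ), ∫⁻ z : ℂ, ENNReal.ofReal (ρ z ^ 2)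

/-- A curve lies in the set `D`. -/
def IsCurveIn (D : Set ℂ) (γ : ℝ → ℂ) : Prop :=
  ∀ t ∈ Icc (0:ℝ) 1, γ t ∈ D

/-- The length of the projection of a curve to the x-axis. -/
noncomputable def horizVar (γ : ℝ → ℂ) : ℝ :=
  Metric.diam ((fun t => (γ t).re) '' Icc (0:ℝ) 1)

/-- `γ` is (a parametrization of) a vertical segment of positive length. -/
def IsVerticalSegment (γ : ℝ → ℂ) : Prop :=
  ∃ x y₁ y₂ : ℝ, y₁ < y₂ ∧ ∀ t, γ t = ⟨x, y₁ + t * (y₂ - y₁)⟩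

/-- The vertical compression `T_ε(x,y) = (x, εy)` acting on curves. -/
def stretch (ε : ℝ) (γ : ℝ → ℂ) : ℝ → ℂ :=
  fun t => ⟨(γ t).re, ε * (γ t).im⟩

/-- `γ₂` is a subcurve of `γ₁`. -/
def IsSubcurve (γ₂ γ₁ : ℝ → ℂ) : Prop :=
  ∃ a b : ℝ, 0 ≤ a ∧ a ≤ b ∧ b ≤ 1 ∧ ∀ t, γ₂ t = γ₁ (a + t * (b - a))

/-- The graph domain (hypograph) of `f : (A,B) → (0,∞]`, as a subset of `ℂ`. -/
def hypograph (A B : ℝ) (f : ℝ → ℝ≥0∞) : Set ℂ :=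
  {z : ℂ | z.re ∈ Ioo A B ∧ 0 < z.im ∧ ENNReal.ofReal z.im < f z.re}

/-- `z` lies on the graph of `f` over `(A,B)`. -/
def onGraph (A B : ℝ) (f : ℝ → ℝ≥0∞) (z : ℂ) : Prop :=
  z.re ∈ Ioo A B ∧ 0 < z.im ∧ ENNReal.ofReal z.im = f z.re

/-- Curves in the hypograph of `f` joining the bottom side over `S` to the graph of `f` over `T`. -/
def connectFamilyGraph (A B : ℝ) (f : ℝ → ℝ≥0∞) (S T : Set ℝ) : Set (ℝ → ℂ) :=
  {γ | (∀ t ∈ Ioo (0:ℝ) 1, γ t ∈ hypograph A B f) ∧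
       (γ 0).im = 0 ∧ (γ 0).re ∈ S ∧
       onGraph A B f (γ 1) ∧ (γ 1).re ∈ T}

/-!
Let `ρ` be admissible with `∫ ρ² < ∞`. Testing the hypothesis on `h = ρ - ρ₀` gives
`∫ ρ₀² ≤ ∫ ρ ρ₀ ≤ ∫ (ρ² + ρ₀²) / 2`, i.e. `∫ ρ₀² ≤ ∫ ρ²`. But `h ρ₀` need not be integrable (the Bochner
integral is then `0` and the hypothesis says nothing), so one tests instead with `h = ρ - ρ₀` on the sets `Eₙ = {ρ₀ ≤ n} ∩ B̄(0, n)` and `h = (ρ - ρ₀)⁺`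
off them; this still has nonnegative integral along the curves of `Γ₀`, and the same pointwise
estimate yields `∫_{D ∩ Eₙ} ρ₀² ≤ ∫ ρ²`, which passes to the limit by monotone convergence.
-/

open MeasureTheory Set

lemma intervalIntegrable_of_curveIntegralρ_ne_zero {ρ : ℂ → ℝ} {γ : ℝ → ℂ}
    (h : curveIntegralρ ρ γ ≠ 0) :
    IntervalIntegrable (fun t => ρ (γ t) * ‖deriv γ t‖) volume 0 1 := by
  by_contra hc
  exact h (intervalIntegral.integral_undef hc)

lemma curveIntegralρ_sub_nonneg {ρ ρ₀ s : ℂ → ℝ} {γ : ℝ → ℂ} {c : ℝ} (hc : 0 < c)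
    (hρ : c ≤ curveIntegralρ ρ γ) (hρ₀ : curveIntegralρ ρ₀ γ = c) (hs : s ≤ ρ₀) :
    0 ≤ curveIntegralρ (ρ - s) γ := by
  have hρi := intervalIntegrable_of_curveIntegralρ_ne_zero (hc.trans_le hρ).ne'
  have hρ₀i := intervalIntegrable_of_curveIntegralρ_ne_zero (hρ₀ ▸ hc.ne')
  by_cases hdiff : IntervalIntegrable (fun t => (ρ - s) (γ t) * ‖deriv γ t‖) volume 0 1
  · have hsplit : (fun t => s (γ t) * ‖deriv γ t‖) =
        fun t => ρ (γ t) * ‖deriv γ t‖ - (ρ - s) (γ t) * ‖deriv γ t‖ := by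
      funext t
      simp only [Pi.sub_apply]
      ring
    have hsi : IntervalIntegrable (fun t => s (γ t) * ‖deriv γ t‖) volume 0 1 :=
      hsplit ▸ hρi.sub hdiff
    have hs_le : curveIntegralρ s γ ≤ curveIntegralρ ρ₀ γ :=
      intervalIntegral.integral_mono_on zero_le_one hsi hρ₀i fun t _ =>
        mul_le_mul_of_nonneg_right (hs _) (norm_nonneg _)
    have hsub : curveIntegralρ (ρ - s) γ = curveIntegralρ ρ γ - curveIntegralρ s γ := by
      rw [curveIntegralρ, curveIntegralρ, curveIntegralρ,
        ← intervalIntegral.integral_sub hρi hsi]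
      simp only [Pi.sub_apply, sub_mul]
    linarith
  · exact (intervalIntegral.integral_undef hdiff).ge

section Truncation

open scoped Classical

variable (ρ ρ₀ : ℂ → ℝ)

def truncationSet (n : ℕ) : Set ℂ := {z | ρ₀ z ≤ n} ∩ Metric.closedBall 0 n

noncomputable def beurlingTest (n : ℕ) : ℂ → ℝ := ρ - (truncationSet ρ₀ n).piecewise ρ₀ (ρ ⊓ ρ₀)

variable {ρ ρ₀}

lemma truncationSet_mono : Monotone (truncationSet ρ₀) := fun _ _ hmn =>
  inter_subset_inter (ofPred_subset_ofPred.mpr fun _ hz => hz.trans (Nat.cast_le.mpr hmn))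
    (Metric.closedBall_subset_closedBall (Nat.cast_le.mpr hmn))

lemma iUnion_truncationSet : ⋃ n, truncationSet ρ₀ n = univ := by
  refine eq_univ_of_forall fun z => mem_iUnion.mpr ⟨max ⌈ρ₀ z⌉₊ ⌈‖z‖⌉₊, ?_, ?_⟩
  · exact (Nat.le_ceil (ρ₀ z)).trans (Nat.cast_le.mpr (le_max_left _ _))
  · rw [Metric.mem_closedBall, dist_zero_right]
    exact (Nat.le_ceil ‖z‖).trans (Nat.cast_le.mpr (le_max_right _ _))

lemma measurableSet_truncationSet (hρ₀ : Measurable ρ₀) (n : ℕ) :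
    MeasurableSet (truncationSet ρ₀ n) :=
  (measurableSet_le hρ₀ measurable_const).inter measurableSet_closedBall

lemma measurable_beurlingTest (hρ : Measurable ρ) (hρ₀ : Measurable ρ₀) (n : ℕ) :
    Measurable (beurlingTest ρ ρ₀ n) :=
  hρ.sub (Measurable.piecewise (measurableSet_truncationSet hρ₀ n) hρ₀ (hρ.min hρ₀))

lemma curveIntegralρ_beurlingTest_nonneg {γ : ℝ → ℂ} (hρ : 1 ≤ curveIntegralρ ρ γ)
    (hρ₀ : curveIntegralρ ρ₀ γ = 1) (n : ℕ) : 0 ≤ curveIntegralρ (beurlingTest ρ ρ₀ n) γ :=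
  curveIntegralρ_sub_nonneg one_pos hρ hρ₀ <|
    piecewise_le (fun _ _ => le_rfl) fun _ _ => inf_le_right

lemma beurlingTest_mul_le (n : ℕ) (z : ℂ) :
    beurlingTest ρ ρ₀ n z * ρ₀ z ≤
      (ρ z ^ 2 - (truncationSet ρ₀ n).indicator (fun z => ρ₀ z ^ 2) z) / 2 := by
  by_cases hz : z ∈ truncationSet ρ₀ n
  · simp only [beurlingTest, Pi.sub_apply, piecewise_eq_of_mem _ _ _ hz, indicator_of_mem hz]
    nlinarith [sq_nonneg (ρ z - ρ₀ z)]
  · simp only [beurlingTest, Pi.sub_apply, piecewise_eq_of_notMem _ _ _ hz,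
      indicator_of_notMem hz, Pi.inf_apply]
    rcases le_total (ρ z) (ρ₀ z) with h | h
    · rw [inf_eq_left.mpr h]
      nlinarith [sq_nonneg (ρ z)]
    · rw [inf_eq_right.mpr h]
      nlinarith [sq_nonneg (ρ z - 2 * ρ₀ z), sq_nonneg (ρ z)]

lemma neg_indicator_le_beurlingTest_mul {z : ℂ} (hρ : 0 ≤ ρ z) (hρ₀ : 0 ≤ ρ₀ z) (n : ℕ) :
    -(truncationSet ρ₀ n).indicator (fun z => ρ₀ z ^ 2) z ≤ beurlingTest ρ ρ₀ n z * ρ₀ z := by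
  by_cases hz : z ∈ truncationSet ρ₀ n
  · simp only [beurlingTest, Pi.sub_apply, piecewise_eq_of_mem _ _ _ hz, indicator_of_mem hz]
    nlinarith [mul_nonneg hρ hρ₀]
  · simp only [beurlingTest, Pi.sub_apply, piecewise_eq_of_notMem _ _ _ hz,
      indicator_of_notMem hz, Pi.inf_apply, neg_zero]
    exact mul_nonneg (sub_nonneg.mpr inf_le_left) hρ₀

variable {μ : Measure ℂ} [IsFiniteMeasureOnCompacts μ]

lemma integrableOn_sq_truncationSet (hρ₀ : Measurable ρ₀) (hρ₀_nonneg : ∀ z, 0 ≤ ρ₀ z)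
    (n : ℕ) : IntegrableOn (fun z => ρ₀ z ^ 2) (truncationSet ρ₀ n) μ := by
  refine IntegrableOn.of_bound ((measure_mono inter_subset_right).trans_lt
    measure_closedBall_lt_top) (hρ₀.pow_const 2).aestronglyMeasurable ((n : ℝ) ^ 2) ?_
  filter_upwards [ae_restrict_mem (measurableSet_truncationSet hρ₀ n)] with z hz
  rw [Real.norm_eq_abs, abs_of_nonneg (sq_nonneg _)]
  exact pow_le_pow_left₀ (hρ₀_nonneg z) hz.1 2

lemma integrable_indicator_sq_truncationSet (hρ₀ : Measurable ρ₀)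
    (hρ₀_nonneg : ∀ z, 0 ≤ ρ₀ z) (n : ℕ) :
    Integrable ((truncationSet ρ₀ n).indicator fun z => ρ₀ z ^ 2) μ :=
  (integrable_indicator_iff (measurableSet_truncationSet hρ₀ n)).mpr
    (integrableOn_sq_truncationSet hρ₀ hρ₀_nonneg n)

lemma integrable_beurlingTest_mul (hρ : Measurable ρ) (hρ₀ : Measurable ρ₀)
    (hρ_nonneg : ∀ z, 0 ≤ ρ z) (hρ₀_nonneg : ∀ z, 0 ≤ ρ₀ z)
    (hρ_sq : Integrable (fun z => ρ z ^ 2) μ) (n : ℕ) :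
    Integrable (fun z => beurlingTest ρ ρ₀ n z * ρ₀ z) μ := by
  refine (hρ_sq.add (integrable_indicator_sq_truncationSet hρ₀ hρ₀_nonneg n)).mono'
    ((measurable_beurlingTest hρ hρ₀ n).mul hρ₀).aestronglyMeasurable
    (ae_of_all _ fun z => ?_)
  have hupper := beurlingTest_mul_le (ρ := ρ) (ρ₀ := ρ₀) n z
  have hlower := neg_indicator_le_beurlingTest_mul (hρ_nonneg z) (hρ₀_nonneg z) n
  have hind : 0 ≤ (truncationSet ρ₀ n).indicator (fun z => ρ₀ z ^ 2) z :=
    indicator_nonneg (fun _ _ => sq_nonneg _) z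
  rw [Pi.add_apply, Real.norm_eq_abs, abs_le]
  constructor <;> linarith [sq_nonneg (ρ z)]

lemma setIntegral_sq_truncationSet_le (hρ : Measurable ρ) (hρ₀ : Measurable ρ₀)
    (hρ_nonneg : ∀ z, 0 ≤ ρ z) (hρ₀_nonneg : ∀ z, 0 ≤ ρ₀ z)
    (hρ_sq : Integrable (fun z => ρ z ^ 2) μ) {n : ℕ}
    (htest : 0 ≤ ∫ z, beurlingTest ρ ρ₀ n z * ρ₀ z ∂μ) :
    ∫ z in truncationSet ρ₀ n, ρ₀ z ^ 2 ∂μ ≤ ∫ z, ρ z ^ 2 ∂μ := by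
  have hind := integrable_indicator_sq_truncationSet (μ := μ) hρ₀ hρ₀_nonneg n
  have hmono : ∫ z, beurlingTest ρ ρ₀ n z * ρ₀ z ∂μ ≤
      ∫ z, (ρ z ^ 2 - (truncationSet ρ₀ n).indicator (fun z => ρ₀ z ^ 2) z) / 2 ∂μ :=
    integral_mono (integrable_beurlingTest_mul hρ hρ₀ hρ_nonneg hρ₀_nonneg hρ_sq n)
      ((hρ_sq.sub hind).div_const 2) (beurlingTest_mul_le n)
  rw [integral_div, integral_sub hρ_sq hind,
    integral_indicator (measurableSet_truncationSet hρ₀ n)] at hmono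
  linarith

end Truncation

lemma lintegral_sq_le_of_isAdmissible {D : Set ℂ} {Γ Γ₀ : Set (ℝ → ℂ)} (hΓ₀ : Γ₀ ⊆ Γ)
    {ρ₀ ρ : ℂ → ℝ} (hρ₀ : Measurable ρ₀) (hρ₀_nonneg : ∀ z, 0 ≤ ρ₀ z)
    (hsupp : ∀ z ∉ D, ρ₀ z = 0) (hone : ∀ γ ∈ Γ₀, curveIntegralρ ρ₀ γ = 1)
    (hpos : ∀ h : ℂ → ℝ, Measurable h →
      (∀ γ ∈ Γ₀, 0 ≤ curveIntegralρ h γ) → 0 ≤ ∫ z in D, h z * ρ₀ z)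
    (hρ : IsAdmissible Γ ρ) :
    ∫⁻ z, ENNReal.ofReal (ρ₀ z ^ 2) ≤ ∫⁻ z, ENNReal.ofReal (ρ z ^ 2) := by
  obtain ⟨hρm, hρ_nonneg, hρΓ⟩ := hρ
  by_cases hK : ∫⁻ z, ENNReal.ofReal (ρ z ^ 2) = ⊤
  · simp [hK]
  have hρ_sq : Integrable (fun z => ρ z ^ 2) :=
    ⟨(hρm.pow_const 2).aestronglyMeasurable, (hasFiniteIntegral_iff_ofReal
      (ae_of_all _ fun z => sq_nonneg _)).mpr (lt_top_iff_ne_top.mpr hK)⟩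
  have htest (n : ℕ) : 0 ≤ ∫ z in D, beurlingTest ρ ρ₀ n z * ρ₀ z :=
    hpos _ (measurable_beurlingTest hρm hρ₀ n) fun γ hγ =>
      curveIntegralρ_beurlingTest_nonneg (hρΓ γ (hΓ₀ hγ)) (hone γ hγ) n
  calc ∫⁻ z, ENNReal.ofReal (ρ₀ z ^ 2)
      = ∫⁻ z in D, ENNReal.ofReal (ρ₀ z ^ 2) := by
        refine (setLIntegral_eq_of_support_subset fun z hz => ?_).symm
        by_contra hD
        simp [hsupp z hD] at hz
    _ = ⨆ n, ∫⁻ z in truncationSet ρ₀ n, ENNReal.ofReal (ρ₀ z ^ 2) ∂volume.restrict D := by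
        rw [← setLIntegral_iUnion_of_directed _ truncationSet_mono.directed_le,
          iUnion_truncationSet, Measure.restrict_univ]
    _ ≤ ∫⁻ z in D, ENNReal.ofReal (ρ z ^ 2) := iSup_le fun n => by
        rw [← ofReal_integral_eq_lintegral_ofReal (integrableOn_sq_truncationSet hρ₀ hρ₀_nonneg n)
            (ae_of_all _ fun _ => sq_nonneg _),
          ← ofReal_integral_eq_lintegral_ofReal hρ_sq.integrableOn
            (ae_of_all _ fun _ => sq_nonneg _)]
        exact ENNReal.ofReal_le_ofReal <| setIntegral_sq_truncationSet_le hρm hρ₀ hρ_nonneg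
          hρ₀_nonneg hρ_sq.integrableOn (htest n)
    _ ≤ ∫⁻ z, ENNReal.ofReal (ρ z ^ 2) := setLIntegral_le_lintegral _ _

/-- Beurling's criterion for extremality of an admissible metric. -/
theorem beurling_criterion (D : Set ℂ) (Γ Γ₀ : Set (ℝ → ℂ)) (hΓ₀ : Γ₀ ⊆ Γ)
    (ρ₀ : ℂ → ℝ) (hadm : IsAdmissible Γ ρ₀) (hsupp : ∀ z ∉ D, ρ₀ z = 0)
    (hone : ∀ γ ∈ Γ₀, curveIntegralρ ρ₀ γ = 1)
    (hpos : ∀ h : ℂ → ℝ, Measurable h →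
      (∀ γ ∈ Γ₀, 0 ≤ curveIntegralρ h γ) → 0 ≤ ∫ z in D, h z * ρ₀ z) :
    modulus Γ = ∫⁻ z : ℂ, ENNReal.ofReal (ρ₀ z ^ 2) :=
  le_antisymm (iInf₂_le ρ₀ hadm) <| le_iInf₂ fun _ hρ =>
    lintegral_sq_le_of_isAdmissible hΓ₀ hadm.1 hadm.2.1 hsupp hone hpos hρ
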